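/- arXiv:1301.7464 — 2 statements merged into one kernel-verified Lean document; each statement's English description precedes it below -/
import Mathlib

section
/- For every n ≥ 1, one has E[exp(−[S_n]^+)] = P[S_n ≤ 0] + P[S̄_n > 0]. -/
open MeasureTheory ProbabilityTheory

/-- Output marginal `P_Y(y) = Σ_x P_X(x) W(y|x)`. -/
noncomputable def outDist {𝒳 𝒴 : Type*} [Fintype 𝒳] (pX : 𝒳 → ℝ) (W : 𝒳 → 𝒴 → ℝ)
    (y : 𝒴) : ℝ := ∑ x, pX x * W x y

/-- Information density `i(x;y) = log (W(y|x) / P_Y(y))`. -/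
noncomputable def infoDen {𝒳 𝒴 : Type*} [Fintype 𝒳] (pX : 𝒳 → ℝ) (W : 𝒳 → 𝒴 → ℝ)
    (x : 𝒳) (y : 𝒴) : ℝ := Real.log (W x y / outDist pX W y)

/-! Split `exp (-[s]⁺) = 1{s ≤ 0} + 1{s > 0} e^{-s}`. Since `i(x;y)` is the log-likelihood ratio
of `P_{XY}` against `P_X × P_Y`, tilting the law of `(Xⁿ, Yⁿ)` by `e^{-Sₙ}` gives the product law
`P_Xⁿ × P_Yⁿ`, which is the law of `(X̄ⁿ, Yⁿ)`; hence `E[e^{-Sₙ}; Sₙ > 0] = P[S̄ₙ > 0]`. With all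
alphabets finite, both sides are finite sums over the values of `(Xⁿ, Yⁿ, X̄ⁿ)`. -/

namespace MeasureTheory

open Finset

lemma measurableSet_setOf_forall_fin_eq {β : Type*} [MeasurableSpace β]
    [MeasurableSingletonClass β] (n : ℕ) (b : Fin n → β) :
    MeasurableSet {f : ℕ → β | ∀ k : Fin n, f k = b k} := by
  simp only [Set.ofPred_forall]
  exact .iInter fun k => measurable_pi_apply _ (measurableSet_singleton _)

variable {Ω α : Type*} [MeasurableSpace Ω] {μ : Measure Ω} [IsFiniteMeasure μ]
  [Fintype α] [MeasurableSpace α] [DiscreteMeasurableSpace α] {T : Ω → α} {w : α → ℝ}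

lemma integral_comp_eq_sum_mul (hT : Measurable T) (hw : ∀ u, μ.real (T ⁻¹' {u}) = w u)
    (f : α → ℝ) : ∫ ω, f (T ω) ∂μ = ∑ u, w u * f u := by
  rw [← integral_map hT.aemeasurable Measurable.of_discrete.aestronglyMeasurable,
    integral_fintype .of_finite]
  simp [map_measureReal_apply hT (measurableSet_singleton _), hw]

lemma measureReal_setOf_comp_eq_sum (hT : Measurable T) (hw : ∀ u, μ.real (T ⁻¹' {u}) = w u)
    (p : α → Prop) [DecidablePred p] :
    μ.real {ω | p (T ω)} = ∑ u, if p u then w u else 0 := by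
  rw [← sum_filter, ← sum_congr rfl fun u _ => hw u,
    sum_measureReal_preimage_singleton _ fun u _ => hT (measurableSet_singleton u)]
  congr 1
  ext ω
  simp

end MeasureTheory

namespace ProbabilityTheory

variable {Ω β γ : Type*} [MeasurableSpace Ω] {μ : Measure Ω}
  [MeasurableSpace β] [MeasurableSingletonClass β] [MeasurableSpace γ] [MeasurableSingletonClass γ]

lemma iIndepFun.measure_setOf_forall_fin_eq {U : ℕ → Ω → β} (hU : iIndepFun U μ) (n : ℕ)
    (b : Fin n → β) :
    μ {ω | ∀ k : Fin n, U k ω = b k} = ∏ k : Fin n, μ {ω | U k ω = b k} := by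
  simpa only [Set.ofPred_forall] using (hU.precomp Fin.val_injective).meas_iInter
    (s := fun k : Fin n => {ω | U k ω = b k}) fun k => ⟨{b k}, measurableSet_singleton _, rfl⟩

lemma IndepFun.measure_setOf_forall_fin_eq_and {U : ℕ → Ω → β} {V : ℕ → Ω → γ}
    (hUV : IndepFun (fun ω k => U k ω) (fun ω k => V k ω) μ) (n : ℕ) (b : Fin n → β)
    (c : Fin n → γ) :
    μ {ω | (∀ k : Fin n, U k ω = b k) ∧ ∀ k : Fin n, V k ω = c k}
      = μ {ω | ∀ k : Fin n, U k ω = b k} * μ {ω | ∀ k : Fin n, V k ω = c k} :=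
  hUV.measure_inter_preimage_eq_mul _ _ (measurableSet_setOf_forall_fin_eq n b)
    (measurableSet_setOf_forall_fin_eq n c)

end ProbabilityTheory

section BlockInformationDensity

open Finset

variable {𝒳 𝒴 ι : Type*} [Fintype 𝒳] [Fintype ι] (pX : 𝒳 → ℝ) (W : 𝒳 → 𝒴 → ℝ)

noncomputable def blockInfoDen (x : ι → 𝒳) (y : ι → 𝒴) : ℝ := ∑ k, infoDen pX W (x k) (y k)

lemma outDist_pos [Nonempty 𝒳] (hpXpos : ∀ x, 0 < pX x) (hWpos : ∀ x y, 0 < W x y) (y : 𝒴) :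
    0 < outDist pX W y :=
  sum_pos (fun x _ => mul_pos (hpXpos x) (hWpos x y)) univ_nonempty

lemma prod_mul_exp_neg_blockInfoDen [Nonempty 𝒳] (hpXpos : ∀ x, 0 < pX x)
    (hWpos : ∀ x y, 0 < W x y) (x : ι → 𝒳) (y : ι → 𝒴) :
    (∏ k, pX (x k) * W (x k) (y k)) * Real.exp (-blockInfoDen pX W x y)
      = (∏ k, pX (x k)) * ∏ k, outDist pX W (y k) := by
  rw [blockInfoDen, ← sum_neg_distrib, Real.exp_sum, ← prod_mul_distrib, ← prod_mul_distrib]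
  refine prod_congr rfl fun k _ => ?_
  have hW := hWpos (x k) (y k)
  rw [infoDen, Real.exp_neg, Real.exp_log (div_pos hW (outDist_pos pX W hpXpos hWpos _))]
  field_simp

lemma sum_prod_eq_prod_outDist [DecidableEq ι] (y : ι → 𝒴) :
    ∑ x : ι → 𝒳, ∏ k, pX (x k) * W (x k) (y k) = ∏ k, outDist pX W (y k) :=
  (Fintype.prod_sum fun k a => pX a * W a (y k)).symm

lemma sum_prod_eq_one [DecidableEq ι] (hpXsum : ∑ x, pX x = 1) :
    ∑ v : ι → 𝒳, ∏ k, pX (v k) = 1 := by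
  rw [← Fintype.prod_sum fun _ a => pX a]
  simp [hpXsum]

lemma exp_neg_max_zero (s : ℝ) :
    Real.exp (-max s 0) = (if s ≤ 0 then 1 else 0) + if 0 < s then Real.exp (-s) else 0 := by
  rcases le_or_gt s 0 with h | h
  · simp [h, not_lt.2 h]
  · simp [h, not_le.2 h, h.le]

/-- The summation variable `u = (x, y, v)` stands for the value of `(Xⁿ, Yⁿ, X̄ⁿ)`. -/
theorem sum_mul_exp_neg_max_blockInfoDen [Nonempty 𝒳] [Fintype 𝒴] [DecidableEq ι]
    (hpXpos : ∀ x, 0 < pX x) (hpXsum : ∑ x, pX x = 1) (hWpos : ∀ x y, 0 < W x y) :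
    ∑ u : (ι → 𝒳) × (ι → 𝒴) × (ι → 𝒳),
        ((∏ k, pX (u.1 k) * W (u.1 k) (u.2.1 k)) * ∏ k, pX (u.2.2 k)) *
          Real.exp (-max (blockInfoDen pX W u.1 u.2.1) 0)
      = (∑ u : (ι → 𝒳) × (ι → 𝒴) × (ι → 𝒳), if blockInfoDen pX W u.1 u.2.1 ≤ 0 then
          (∏ k, pX (u.1 k) * W (u.1 k) (u.2.1 k)) * ∏ k, pX (u.2.2 k) else 0)
        + ∑ u : (ι → 𝒳) × (ι → 𝒴) × (ι → 𝒳), if 0 < blockInfoDen pX W u.2.2 u.2.1 then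
          (∏ k, pX (u.1 k) * W (u.1 k) (u.2.1 k)) * ∏ k, pX (u.2.2 k) else 0 := by
  simp only [exp_neg_max_zero, mul_add, sum_add_distrib, mul_ite, mul_one, mul_zero]
  congr 1
  simp only [Fintype.sum_prod_type]
  refine sum_comm.trans ((sum_congr rfl fun y _ => ?_).trans sum_comm)
  calc ∑ x : ι → 𝒳, ∑ v : ι → 𝒳, (if 0 < blockInfoDen pX W x y then
          ((∏ k, pX (x k) * W (x k) (y k)) * ∏ k, pX (v k)) *
            Real.exp (-blockInfoDen pX W x y) else 0)
      = ∑ x : ι → 𝒳, if 0 < blockInfoDen pX W x y then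
          (∏ k, pX (x k)) * ∏ k, outDist pX W (y k) else 0 := by
        refine sum_congr rfl fun x _ => ?_
        split_ifs
        · rw [← prod_mul_exp_neg_blockInfoDen pX W hpXpos hWpos, ← sum_mul, ← mul_sum,
            sum_prod_eq_one pX hpXsum, mul_one]
        · simp
    _ = ∑ v : ι → 𝒳, ∑ x : ι → 𝒳, if 0 < blockInfoDen pX W v y then
          (∏ k, pX (x k) * W (x k) (y k)) * ∏ k, pX (v k) else 0 := by
        refine sum_congr rfl fun v _ => ?_
        split_ifs
        · rw [← sum_mul, sum_prod_eq_prod_outDist, mul_comm]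
        · simp
    _ = _ := sum_comm

end BlockInformationDensity

section BlockLaw

open Finset

variable {𝒳 𝒴 : Type*} [MeasurableSpace 𝒳] [DiscreteMeasurableSpace 𝒳]
  [MeasurableSpace 𝒴] [DiscreteMeasurableSpace 𝒴] {pX : 𝒳 → ℝ} {W : 𝒳 → 𝒴 → ℝ}
  {Ω : Type*} [MeasurableSpace Ω] {μ : Measure Ω} {X : ℕ → Ω → 𝒳} {Y : ℕ → Ω → 𝒴}
  {Xbar : ℕ → Ω → 𝒳}

lemma measureReal_preimage_blocks (hpXpos : ∀ x, 0 < pX x) (hWpos : ∀ x y, 0 < W x y)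
    (hXYindep : iIndepFun (fun k ω => (X k ω, Y k ω)) μ)
    (hXYlaw : ∀ k x y, μ {ω | X k ω = x ∧ Y k ω = y} = ENNReal.ofReal (pX x * W x y))
    (hXbarindep : iIndepFun Xbar μ)
    (hXbarlaw : ∀ k x, μ {ω | Xbar k ω = x} = ENNReal.ofReal (pX x))
    (hcross : IndepFun (fun ω (k : ℕ) => (X k ω, Y k ω)) (fun ω (k : ℕ) => Xbar k ω) μ)
    (n : ℕ) (x : Fin n → 𝒳) (y : Fin n → 𝒴) (v : Fin n → 𝒳) :
    μ.real ((fun ω => (fun k : Fin n => X k ω, fun k : Fin n => Y k ω,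
        fun k : Fin n => Xbar k ω)) ⁻¹' {(x, y, v)})
      = (∏ k, pX (x k) * W (x k) (y k)) * ∏ k, pX (v k) := by
  have hset : (fun ω => (fun k : Fin n => X k ω, fun k : Fin n => Y k ω,
        fun k : Fin n => Xbar k ω)) ⁻¹' {(x, y, v)}
      = {ω | (∀ k : Fin n, (X k ω, Y k ω) = (x k, y k)) ∧ ∀ k : Fin n, Xbar k ω = v k} := by
    ext ω
    simp [funext_iff, forall_and, and_assoc]
  have hPXY : ∀ k, 0 ≤ pX (x k) * W (x k) (y k) := fun k => (mul_pos (hpXpos _) (hWpos _ _)).le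
  have hPX : ∀ k, 0 ≤ pX (v k) := fun k => (hpXpos _).le
  rw [measureReal_def, hset,
    hcross.measure_setOf_forall_fin_eq_and (U := fun k ω => (X k ω, Y k ω)),
    hXYindep.measure_setOf_forall_fin_eq, hXbarindep.measure_setOf_forall_fin_eq]
  simp only [Prod.mk.injEq, hXYlaw, hXbarlaw]
  rw [← ENNReal.ofReal_prod_of_nonneg fun k _ => hPXY k,
    ← ENNReal.ofReal_prod_of_nonneg fun k _ => hPX k,
    ← ENNReal.ofReal_mul (prod_nonneg fun k _ => hPXY k), ENNReal.toReal_ofReal]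
  exact mul_nonneg (prod_nonneg fun k _ => hPXY k) (prod_nonneg fun k _ => hPX k)

end BlockLaw

theorem stmt4_general {𝒳 𝒴 : Type*} [Fintype 𝒳] [Nonempty 𝒳] [Fintype 𝒴]
    [MeasurableSpace 𝒳] [DiscreteMeasurableSpace 𝒳]
    [MeasurableSpace 𝒴] [DiscreteMeasurableSpace 𝒴]
    (pX : 𝒳 → ℝ) (hpXpos : ∀ x, 0 < pX x) (hpXsum : ∑ x, pX x = 1)
    (W : 𝒳 → 𝒴 → ℝ) (hWpos : ∀ x y, 0 < W x y)
    {Ω : Type*} [MeasurableSpace Ω] (μ : Measure Ω) [IsProbabilityMeasure μ]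
    (X : ℕ → Ω → 𝒳) (Y : ℕ → Ω → 𝒴) (Xbar : ℕ → Ω → 𝒳)
    (hXm : ∀ k, Measurable (X k)) (hYm : ∀ k, Measurable (Y k))
    (hXbarm : ∀ k, Measurable (Xbar k))
    -- `((X_k, Y_k))_k` is an i.i.d. sequence with law `P_{XY}`:
    (hXYindep : iIndepFun (fun k ω => (X k ω, Y k ω)) μ)
    (hXYlaw : ∀ k x y, μ {ω | X k ω = x ∧ Y k ω = y} = ENNReal.ofReal (pX x * W x y))
    -- `(X̄_k)_k` is an i.i.d. sequence with law `P_X`: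
    (hXbarindep : iIndepFun Xbar μ)
    (hXbarlaw : ∀ k x, μ {ω | Xbar k ω = x} = ENNReal.ofReal (pX x))
    -- independent of `((X_k, Y_k))_k`:
    (hcross : IndepFun (fun ω (k : ℕ) => (X k ω, Y k ω)) (fun ω (k : ℕ) => Xbar k ω) μ)
    (n : ℕ) :
    ∫ ω, Real.exp (-(max (∑ k ∈ Finset.range n, infoDen pX W (X k ω) (Y k ω)) 0)) ∂μ
      = (μ {ω | (∑ k ∈ Finset.range n, infoDen pX W (X k ω) (Y k ω)) ≤ 0}).toReal
        + (μ {ω | 0 < ∑ k ∈ Finset.range n, infoDen pX W (Xbar k ω) (Y k ω)}).toReal := by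
  let T : Ω → (Fin n → 𝒳) × (Fin n → 𝒴) × (Fin n → 𝒳) :=
    fun ω => (fun k => X k ω, fun k => Y k ω, fun k => Xbar k ω)
  have hT : Measurable T := by fun_prop
  have hlaw : ∀ u, μ.real (T ⁻¹' {u})
      = (∏ k, pX (u.1 k) * W (u.1 k) (u.2.1 k)) * ∏ k, pX (u.2.2 k) := fun u => measureReal_preimage_blocks hpXpos hWpos hXYindep hXYlaw hXbarindep hXbarlaw
    hcross n u.1 u.2.1 u.2.2
  have key := sum_mul_exp_neg_max_blockInfoDen pX W hpXpos hpXsum hWpos (ι := Fin n)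
  rw [← integral_comp_eq_sum_mul hT hlaw, ← measureReal_setOf_comp_eq_sum hT hlaw,
    ← measureReal_setOf_comp_eq_sum hT hlaw] at key
  simp only [← Fin.sum_univ_eq_sum_range]
  exact key

/-- For every `n ≥ 1`,
`E[exp(−[Sₙ]⁺)] = P[Sₙ ≤ 0] + P[S̄ₙ > 0]`. -/
theorem stmt4 {𝒳 𝒴 : Type*} [Fintype 𝒳] [Nonempty 𝒳] [Fintype 𝒴] [Nonempty 𝒴]
    [MeasurableSpace 𝒳] [DiscreteMeasurableSpace 𝒳]
    [MeasurableSpace 𝒴] [DiscreteMeasurableSpace 𝒴]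
    (pX : 𝒳 → ℝ) (hpXpos : ∀ x, 0 < pX x) (hpXsum : ∑ x, pX x = 1)
    (W : 𝒳 → 𝒴 → ℝ) (hWpos : ∀ x y, 0 < W x y) (hWsum : ∀ x, ∑ y, W x y = 1)
    {Ω : Type*} [MeasurableSpace Ω] (μ : Measure Ω) [IsProbabilityMeasure μ]
    (X : ℕ → Ω → 𝒳) (Y : ℕ → Ω → 𝒴) (Xbar : ℕ → Ω → 𝒳)
    (hXm : ∀ k, Measurable (X k)) (hYm : ∀ k, Measurable (Y k))
    (hXbarm : ∀ k, Measurable (Xbar k))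
    -- `((X_k, Y_k))_k` is an i.i.d. sequence with law `P_{XY}`:
    (hXYindep : iIndepFun (fun k ω => (X k ω, Y k ω)) μ)
    (hXYlaw : ∀ k x y, μ {ω | X k ω = x ∧ Y k ω = y} = ENNReal.ofReal (pX x * W x y))
    -- `(X̄_k)_k` is an i.i.d. sequence with law `P_X`:
    (hXbarindep : iIndepFun Xbar μ)
    (hXbarlaw : ∀ k x, μ {ω | Xbar k ω = x} = ENNReal.ofReal (pX x))
    -- independent of `((X_k, Y_k))_k`:
    (hcross : IndepFun (fun ω (k : ℕ) => (X k ω, Y k ω)) (fun ω (k : ℕ) => Xbar k ω) μ)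
    (n : ℕ) (hn : 1 ≤ n) :
    ∫ ω, Real.exp (-(max (∑ k ∈ Finset.range n, infoDen pX W (X k ω) (Y k ω)) 0)) ∂μ
      = (μ {ω | (∑ k ∈ Finset.range n, infoDen pX W (X k ω) (Y k ω)) ≤ 0}).toReal
        + (μ {ω | 0 < ∑ k ∈ Finset.range n, infoDen pX W (Xbar k ω) (Y k ω)}).toReal :=
  stmt4_general pX hpXpos hpXsum W hWpos μ X Y Xbar hXm hYm hXbarm hXYindep hXYlaw hXbarindep
    hXbarlaw hcross n
end

section
/- For all integers n_1 ≥ 1 and I ≥ 1 and all real γ ≥ 0, set n_j = n_1 + (j−1)I and τ_0 = inf{j ≥ 1 : S_{n_j} ≥ γ}. Then τ_0 < ∞ almost surely, n_{τ_0} is integrable, and E[n_{τ_0}] ≤ (γ + max(n_1, I)·B)/C. -/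
open MeasureTheory ProbabilityTheory

/-!
Let `N = n₁ + τ₀ I` be the stopping time. Whether `k < N` is decided by the first `k` summands, so
each summand `f k` is independent of the event `{k < N}`, and summing `E[f k; k < N] = C P(k < N)`
over `k` gives Wald's identity `E[S_N] = C E[N]`. The overshoot is bounded pathwise: either
`N = n₁`, or `S_{N - I} < γ` and the last block adds at most `I B`; hence
`S_N ≤ γ + max(n₁, I) B`. Finiteness of `E[N]` (and of `τ₀`) comes from Hoeffding's lemma, which
makes `P(S_n ≤ γ)` decay geometrically in `n`.
-/

section

open Finset
open scoped ENNReal NNReal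

variable {Ω : Type*} {mΩ : MeasurableSpace Ω} {μ : Measure Ω}

lemma setIntegral_eq_measureReal_mul_integral_of_indep [IsFiniteMeasure μ]
    {m₁ m₂ : MeasurableSpace Ω} (hle₁ : m₁ ≤ mΩ) (hle₂ : m₂ ≤ mΩ) (hind : Indep m₁ m₂ μ)
    {g : Ω → ℝ} (hg : StronglyMeasurable[m₁] g) (hgi : Integrable g μ) {A : Set Ω}
    (hA : MeasurableSet[m₂] A) :
    ∫ ω in A, g ω ∂μ = μ.real A * ∫ ω, g ω ∂μ := by
  rw [← setIntegral_condExp hle₂ hgi hA, setIntegral_congr_ae (hle₂ _ hA), setIntegral_const,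
    smul_eq_mul]
  filter_upwards [condExp_indep_eq hle₁ hle₂ hg hind] with ω hω _ using hω

lemma ProbabilityTheory.iIndepFun.indep_comap_iSup_lt {β : Type*} [MeasurableSpace β]
    {f : ℕ → Ω → β} (hmeas : ∀ k, Measurable (f k)) (hindep : iIndepFun f μ) (k : ℕ) :
    Indep (MeasurableSpace.comap (f k) inferInstance)
      (⨆ i < k, MeasurableSpace.comap (f i) inferInstance) μ := by
  rw [iIndepFun_iff_iIndep] at hindep
  have h := indep_iSup_of_disjoint (fun i => (hmeas i).comap_le) hindep
    (S := {k}) (T := Set.Iio k) (by simp)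
  exact indep_of_indep_of_le_left h <|
    le_iSup₂ (f := fun i (_ : i ∈ ({k} : Set ℕ)) => MeasurableSpace.comap (f i) inferInstance) k rfl

lemma measurable_sInf_setOf {p : Ω → ℕ → Prop} (hp : ∀ j, MeasurableSet {ω | p ω j}) :
    Measurable fun ω => sInf {j | p ω j} := by
  classical
  refine measurable_to_countable' fun m => ?_
  have hpre : (fun ω => sInf {j | p ω j}) ⁻¹' {m} =
      {ω | p ω m ∧ ∀ j < m, ¬ p ω j} ∪ {ω | m = 0 ∧ ∀ j, ¬ p ω j} := by
    ext ω
    by_cases h : ∃ j, p ω j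
    · rw [Set.mem_preimage, Set.mem_singleton_iff, Nat.sInf_def (s := {j | p ω j}) h,
        Nat.find_eq_iff]
      simp [h]
    · push Not at h
      simp [h, eq_comm]
  rw [hpre]
  simp only [Set.ofPred_and, Set.ofPred_forall]
  measurability

lemma lintegral_natCast_eq_tsum_measure_lt {N : Ω → ℕ} (hN : Measurable N) :
    ∫⁻ ω, (N ω : ℝ≥0∞) ∂μ = ∑' k, μ {ω | k < N ω} := by
  have hlayer : ∀ ω, (N ω : ℝ≥0∞) = ∑' k, {ω | k < N ω}.indicator 1 ω := by
    intro ω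
    rw [tsum_eq_sum (s := range (N ω)) (fun k hk => by simpa using hk),
      sum_congr rfl fun k hk => Set.indicator_of_mem (s := {ω | k < N ω}) (mem_range.1 hk) _]
    simp
  have hmeas : ∀ k, MeasurableSet {ω | k < N ω} := fun k => measurableSet_lt measurable_const hN
  simp_rw [hlayer]
  rw [lintegral_tsum fun k => (measurable_one.indicator (hmeas k)).aemeasurable]
  exact tsum_congr fun k => lintegral_indicator_one (hmeas k)

lemma integral_comp_eq_sum_measureReal_preimage [IsFiniteMeasure μ] {α : Type*} [Fintype α]
    [MeasurableSpace α] [DiscreteMeasurableSpace α] {Z : Ω → α} (hZ : Measurable Z) (g : α → ℝ) :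
    ∫ ω, g (Z ω) ∂μ = ∑ a, μ.real (Z ⁻¹' {a}) * g a := by
  rw [← integral_map hZ.aemeasurable (Measurable.of_discrete.aestronglyMeasurable),
    integral_fintype .of_finite]
  simp [map_measureReal_apply hZ (measurableSet_singleton _)]

lemma measureReal_sum_range_le_le_of_hasSubgaussianMGF [IsFiniteMeasure μ] {f : ℕ → Ω → ℝ}
    {C : ℝ} {c : ℝ≥0}
    (hindep : iIndepFun f μ) (hsub : ∀ k, HasSubgaussianMGF (fun ω => f k ω - C) c μ)
    {t : ℝ} (ht : 0 ≤ t) (n : ℕ) (γ : ℝ) :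
    μ.real {ω | ∑ k ∈ range n, f k ω ≤ γ}
      ≤ Real.exp (t * γ) * Real.exp (-t * C + c * t ^ 2 / 2) ^ n := by
  have hZ : HasSubgaussianMGF (fun ω => ∑ k ∈ range n, (f k ω - C)) (∑ _k ∈ range n, c) μ :=
    HasSubgaussianMGF.sum_of_iIndepFun
      (hindep.comp (fun _ x => x - C) fun _ => measurable_sub_const C) fun k _ => hsub k
  have hset : {ω | ∑ k ∈ range n, f k ω ≤ γ}
      = {ω | ∑ k ∈ range n, (f k ω - C) ≤ γ - n * C} := by
    ext ω; simp [sum_sub_distrib]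
  calc μ.real {ω | ∑ k ∈ range n, f k ω ≤ γ}
      ≤ Real.exp (-(-t) * (γ - n * C)) * mgf (fun ω => ∑ k ∈ range n, (f k ω - C)) μ (-t) := by
        rw [hset]
        exact measure_le_le_exp_mul_mgf _ (by linarith) (hZ.integrable_exp_mul _)
    _ ≤ Real.exp (-(-t) * (γ - n * C)) * Real.exp (n * c * (-t) ^ 2 / 2) := by
        gcongr
        simpa using hZ.mgf_le (-t)
    _ = Real.exp (t * γ) * Real.exp (-t * C + c * t ^ 2 / 2) ^ n := by
        rw [← Real.exp_nat_mul, ← Real.exp_add, ← Real.exp_add]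
        ring_nf

lemma tsum_measure_sum_range_lt_ne_top_of_hasSubgaussianMGF [IsFiniteMeasure μ]
    {f : ℕ → Ω → ℝ} {C : ℝ} {c : ℝ≥0} (hindep : iIndepFun f μ)
    (hsub : ∀ k, HasSubgaussianMGF (fun ω => f k ω - C) c μ) (hc : 0 < c) (hC : 0 < C)
    {I : ℕ} (hI : 0 < I) (n₁ : ℕ) (γ : ℝ) :
    ∑' j, μ {ω | ∑ k ∈ range (n₁ + j * I), f k ω < γ} ≠ ∞ := by
  -- `t = C / c` minimises the exponent `-t C + c t² / 2` of the Chernoff bound.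
  set t := C / c
  set r := Real.exp (-t * C + c * t ^ 2 / 2)
  have hr : r < 1 := by
    have hexp : -t * C + c * t ^ 2 / 2 = -(C ^ 2 / (2 * c)) := by
      simp only [t]; field_simp; ring
    rw [Real.exp_lt_one_iff, hexp, neg_lt_zero]
    positivity
  have hbound : ∀ j, μ {ω | ∑ k ∈ range (n₁ + j * I), f k ω < γ}
      ≤ ENNReal.ofReal (Real.exp (t * γ) * r ^ n₁ * (r ^ I) ^ j) := fun j => by
    rw [mul_assoc, ← pow_mul, ← pow_add, mul_comm I j]
    refine (measure_mono (Set.ofPred_subset_ofPred.2 fun ω => le_of_lt)).trans ?_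
    rw [← ENNReal.ofReal_toReal (measure_ne_top μ _)]
    exact ENNReal.ofReal_le_ofReal
      (measureReal_sum_range_le_le_of_hasSubgaussianMGF hindep hsub (by positivity) _ γ)
  have hsummable : Summable fun j : ℕ => Real.exp (t * γ) * r ^ n₁ * (r ^ I) ^ j :=
    (summable_geometric_of_lt_one (by positivity)
      (pow_lt_one₀ (by positivity) hr hI.ne')).mul_left _
  refine ne_top_of_le_ne_top ?_ (ENNReal.tsum_le_tsum hbound)
  rw [← ENNReal.ofReal_tsum_of_nonneg (fun j => by positivity) hsummable]
  exact ENNReal.ofReal_ne_top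

-- Wald's identity, with `A k` in the role of the event `{k < N}` for a stopping time `N`.
lemma integral_tsum_indicator_eq_mul_tsum {f : ℕ → Ω → ℝ} {B C : ℝ}
    [IsFiniteMeasure μ] (hmeas : ∀ k, Measurable (f k)) (hindep : iIndepFun f μ)
    (hbd : ∀ k ω, |f k ω| ≤ B) (hmean : ∀ k, μ[f k] = C) {A : ℕ → Set Ω}
    (hA : ∀ k, MeasurableSet[⨆ i < k, MeasurableSpace.comap (f i) inferInstance] (A k))
    (hsum : ∑' k, μ (A k) ≠ ∞) :
    ∫ ω, ∑' k, (A k).indicator (f k) ω ∂μ = C * ∑' k, μ.real (A k) := by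
  have hle : ∀ k, ⨆ i < k, MeasurableSpace.comap (f i) inferInstance ≤ mΩ :=
    fun k => iSup₂_le fun i _ => (hmeas i).comap_le
  have hAm : ∀ k, MeasurableSet (A k) := fun k => hle k _ (hA k)
  have hint : ∀ k, Integrable (f k) μ := fun k =>
    Integrable.of_bound (hmeas k).aestronglyMeasurable B (ae_of_all _ (hbd k))
  have hterm : ∀ k, ∫ ω, (A k).indicator (f k) ω ∂μ = C * μ.real (A k) := fun k => by
    rw [integral_indicator (hAm k), setIntegral_eq_measureReal_mul_integral_of_indep
      (hmeas k).comap_le (hle k) (hindep.indep_comap_iSup_lt hmeas k)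
      (comap_measurable (f k)).stronglyMeasurable (hint k) (hA k), hmean, mul_comm]
  have hnorm : ∀ k, ∫⁻ ω, ‖(A k).indicator (f k) ω‖ₑ ∂μ ≤ ENNReal.ofReal B * μ (A k) := by
    intro k
    simp_rw [enorm_indicator_eq_indicator_enorm]
    rw [lintegral_indicator (hAm k), ← setLIntegral_const]
    exact setLIntegral_mono measurable_const fun ω _ => by
      rw [Real.enorm_eq_ofReal_abs]; exact ENNReal.ofReal_le_ofReal (hbd k ω)
  have hsum_norm : ∑' k, ∫⁻ ω, ‖(A k).indicator (f k) ω‖ₑ ∂μ ≠ ∞ :=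
    ne_top_of_le_ne_top (by rw [ENNReal.tsum_mul_left]; exact ENNReal.mul_ne_top (by simp) hsum)
      (ENNReal.tsum_le_tsum hnorm)
  rw [integral_tsum (fun k => ((hmeas k).indicator (hAm k)).aestronglyMeasurable) hsum_norm,
    tsum_congr hterm, tsum_mul_left]

section HittingTime

variable (f : ℕ → Ω → ℝ) (γ : ℝ) (n₁ I : ℕ)

-- `hitIndex` is the paper's `τ₀` and `hitTime` is `n_{τ₀}`. If `γ` is never reached, `hitIndex`
-- takes the junk value `sInf ∅ = 0`.
noncomputable def hitIndex (ω : Ω) : ℕ :=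
  sInf {j | γ ≤ ∑ k ∈ range (n₁ + j * I), f k ω}

noncomputable def hitTime (ω : Ω) : ℕ :=
  n₁ + hitIndex f γ n₁ I ω * I

-- Off the null set where `γ` is never reached this is `{k < hitTime}`; unlike that event, it is
-- determined by `f 0, …, f (k - 1)` everywhere.
def notStoppedAt (k : ℕ) : Set Ω :=
  {ω | ∀ j, n₁ + j * I ≤ k → ∑ i ∈ range (n₁ + j * I), f i ω < γ}

variable {f γ n₁ I}

lemma sum_lt_of_lt_hitIndex {ω : Ω} {j : ℕ} (hj : j < hitIndex f γ n₁ I ω) :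
    ∑ k ∈ range (n₁ + j * I), f k ω < γ :=
  not_le.1 (Nat.notMem_of_lt_sInf hj)

lemma mem_notStoppedAt_iff {ω : Ω} (hω : ∃ j, γ ≤ ∑ k ∈ range (n₁ + j * I), f k ω) (k : ℕ) :
    ω ∈ notStoppedAt f γ n₁ I k ↔ k < hitTime f γ n₁ I ω := by
  constructor
  · intro h
    by_contra hk
    exact (h _ (not_lt.1 hk)).not_ge (Nat.sInf_mem hω)
  · intro hk j hj
    refine sum_lt_of_lt_hitIndex (not_le.1 fun hτj => ?_)
    have := Nat.mul_le_mul_right I hτj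
    simp only [hitTime] at hk
    omega

lemma measurableSet_notStoppedAt (k : ℕ) :
    MeasurableSet[⨆ i < k, MeasurableSpace.comap (f i) inferInstance]
      (notStoppedAt f γ n₁ I k) := by
  have hf : ∀ i < k, Measurable[⨆ i < k, MeasurableSpace.comap (f i) inferInstance] (f i) :=
    fun i hi => (comap_measurable (f i)).mono
      (le_iSup₂ (f := fun i (_ : i < k) => MeasurableSpace.comap (f i) inferInstance) i hi) le_rfl
  simp only [notStoppedAt, Set.ofPred_forall]
  refine MeasurableSet.iInter fun _ => MeasurableSet.iInter fun _ =>
    measurableSet_lt (Finset.measurable_sum _ fun i hi => hf i ?_) measurable_const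
  have := mem_range.1 hi
  omega

lemma measurable_hitIndex (hmeas : ∀ k, Measurable (f k)) : Measurable (hitIndex f γ n₁ I) :=
  measurable_sInf_setOf fun _ =>
    measurableSet_le measurable_const (Finset.measurable_sum _ fun k _ => hmeas k)

lemma measurable_hitTime (hmeas : ∀ k, Measurable (f k)) : Measurable (hitTime f γ n₁ I) :=
  (measurable_from_nat (f := fun m => n₁ + m * I)).comp (measurable_hitIndex hmeas)

lemma sum_range_hitTime_le {B : ℝ} (hbd : ∀ k ω, |f k ω| ≤ B) (hγ : 0 ≤ γ) (ω : Ω) :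
    ∑ k ∈ range (hitTime f γ n₁ I ω), f k ω ≤ γ + ((max n₁ I : ℕ) : ℝ) * B := by
  have hB : 0 ≤ B := (abs_nonneg _).trans (hbd 0 ω)
  have hsum_le : ∀ s : Finset ℕ, ∑ k ∈ s, f k ω ≤ #s * B := fun s => by
    simpa using sum_le_card_nsmul s _ B fun k _ => (le_abs_self _).trans (hbd k ω)
  have hn₁ : (n₁ : ℝ) * B ≤ ((max n₁ I : ℕ) : ℝ) * B := by gcongr; exact le_max_left n₁ I
  have hI : (I : ℝ) * B ≤ ((max n₁ I : ℕ) : ℝ) * B := by gcongr; exact le_max_right n₁ I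
  rcases hτ : hitIndex f γ n₁ I ω with _ | m
  · have := hsum_le (range n₁)
    simp only [hitTime, hτ, zero_mul, add_zero, card_range] at this ⊢
    linarith
  · have hlt : ∑ k ∈ range (n₁ + m * I), f k ω < γ := sum_lt_of_lt_hitIndex (by omega)
    have hblock := hsum_le (Ico (n₁ + m * I) (n₁ + (m + 1) * I))
    rw [Nat.card_Ico, show n₁ + (m + 1) * I - (n₁ + m * I) = I by ring_nf; omega] at hblock
    rw [hitTime, hτ, ← sum_range_add_sum_Ico _ (by nlinarith : n₁ + m * I ≤ n₁ + (m + 1) * I)]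
    linarith

end HittingTime

section BoundedIncrements

variable [IsProbabilityMeasure μ] {f : ℕ → Ω → ℝ} {B C γ : ℝ} {n₁ I : ℕ}

lemma tsum_measure_sum_range_lt_ne_top (hmeas : ∀ k, Measurable (f k))
    (hindep : iIndepFun f μ) (hbd : ∀ k ω, |f k ω| ≤ B) (hmean : ∀ k, μ[f k] = C)
    (hC : 0 < C) (hI : 0 < I) (n₁ : ℕ) (γ : ℝ) :
    ∑' j, μ {ω | ∑ k ∈ range (n₁ + j * I), f k ω < γ} ≠ ∞ := by
  have hCB : C ≤ B := by
    have h := norm_integral_le_of_norm_le_const (μ := μ)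
      (ae_of_all μ fun ω => (Real.norm_eq_abs (f 0 ω)).trans_le (hbd 0 ω))
    rw [hmean 0, Real.norm_eq_abs] at h
    simpa using (le_abs_self C).trans h
  refine tsum_measure_sum_range_lt_ne_top_of_hasSubgaussianMGF hindep
    (c := (‖B - -B‖₊ / 2) ^ 2) (fun k => ?_) ?_ hC hI n₁ γ
  · rw [← hmean k]
    exact hasSubgaussianMGF_of_mem_Icc (hmeas k).aemeasurable
      (ae_of_all _ fun ω => abs_le.1 (hbd k ω))
  · exact pow_pos (half_pos (nnnorm_pos.2 fun h => by linarith)) 2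

theorem measure_forall_sum_lt_eq_zero (hmeas : ∀ k, Measurable (f k))
    (hindep : iIndepFun f μ) (hbd : ∀ k ω, |f k ω| ≤ B) (hmean : ∀ k, μ[f k] = C)
    (hC : 0 < C) (hI : 0 < I) :
    μ {ω | ∀ j, ∑ k ∈ range (n₁ + j * I), f k ω < γ} = 0 := by
  have h := ENNReal.tendsto_atTop_zero_of_tsum_ne_top
    (tsum_measure_sum_range_lt_ne_top hmeas hindep hbd hmean hC hI n₁ γ)
  exact le_antisymm (ge_of_tendsto' h fun j => measure_mono fun ω hω => hω j) bot_le

lemma lintegral_hitTime_ne_top (hmeas : ∀ k, Measurable (f k))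
    (hindep : iIndepFun f μ) (hbd : ∀ k ω, |f k ω| ≤ B) (hmean : ∀ k, μ[f k] = C)
    (hC : 0 < C) (hI : 0 < I) :
    ∫⁻ ω, (hitTime f γ n₁ I ω : ℝ≥0∞) ∂μ ≠ ∞ := by
  have hτ_fin : ∫⁻ ω, (hitIndex f γ n₁ I ω : ℝ≥0∞) ∂μ ≠ ∞ := by
    rw [lintegral_natCast_eq_tsum_measure_lt (measurable_hitIndex hmeas)]
    exact ne_top_of_le_ne_top (tsum_measure_sum_range_lt_ne_top hmeas hindep hbd hmean hC hI n₁ γ)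
      (ENNReal.tsum_le_tsum fun j => measure_mono fun ω => sum_lt_of_lt_hitIndex)
  simp only [hitTime, Nat.cast_add, Nat.cast_mul]
  rw [lintegral_add_left measurable_const, lintegral_mul_const' _ _ (ENNReal.natCast_ne_top I)]
  exact ENNReal.add_ne_top.2 ⟨by simp, ENNReal.mul_ne_top hτ_fin (ENNReal.natCast_ne_top I)⟩

theorem integrable_hitTime (hmeas : ∀ k, Measurable (f k))
    (hindep : iIndepFun f μ) (hbd : ∀ k ω, |f k ω| ≤ B) (hmean : ∀ k, μ[f k] = C)
    (hC : 0 < C) (hI : 0 < I) :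
    Integrable (fun ω => (hitTime f γ n₁ I ω : ℝ)) μ := by
  simpa using integrable_toReal_of_lintegral_ne_top
    (measurable_from_nat.comp (measurable_hitTime hmeas)).aemeasurable
    (lintegral_hitTime_ne_top hmeas hindep hbd hmean hC hI)

lemma integrable_sum_range_hitTime (hmeas : ∀ k, Measurable (f k))
    (hindep : iIndepFun f μ) (hbd : ∀ k ω, |f k ω| ≤ B) (hmean : ∀ k, μ[f k] = C)
    (hC : 0 < C) (hI : 0 < I) :
    Integrable (fun ω => ∑ k ∈ range (hitTime f γ n₁ I ω), f k ω) μ := by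
  have hmeas_stopped : Measurable fun ω => ∑ k ∈ range (hitTime f γ n₁ I ω), f k ω :=
    (measurable_from_prod_countable_left (f := fun p : Ω × ℕ => ∑ k ∈ range p.2, f k p.1)
      fun n => Finset.measurable_sum (range n) fun k _ => hmeas k).comp
      (measurable_id.prodMk (measurable_hitTime hmeas))
  refine ((integrable_hitTime (n₁ := n₁) (γ := γ) hmeas hindep hbd hmean hC hI).mul_const B).mono'
    hmeas_stopped.aestronglyMeasurable (ae_of_all _ fun ω => ?_)
  rw [Real.norm_eq_abs]
  refine (abs_sum_le_sum_abs _ _).trans ?_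
  simpa using sum_le_card_nsmul (range (hitTime f γ n₁ I ω)) _ B fun k _ => hbd k ω

theorem integral_hitTime_le (hmeas : ∀ k, Measurable (f k))
    (hindep : iIndepFun f μ) (hbd : ∀ k ω, |f k ω| ≤ B) (hmean : ∀ k, μ[f k] = C)
    (hC : 0 < C) (hI : 0 < I) (hγ : 0 ≤ γ) :
    ∫ ω, (hitTime f γ n₁ I ω : ℝ) ∂μ ≤ (γ + ((max n₁ I : ℕ) : ℝ) * B) / C := by
  have hhit : ∀ᵐ ω ∂μ, ∃ j, γ ≤ ∑ k ∈ range (n₁ + j * I), f k ω := by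
    rw [ae_iff]
    simpa using measure_forall_sum_lt_eq_zero (n₁ := n₁) (γ := γ) hmeas hindep hbd hmean hC hI
  have hA : ∀ k, notStoppedAt f γ n₁ I k =ᵐ[μ] {ω | k < hitTime f γ n₁ I ω} := fun k => by
    filter_upwards [hhit] with ω hω using propext (mem_notStoppedAt_iff hω k)
  have hsumA : ∑' k, μ (notStoppedAt f γ n₁ I k) = ∫⁻ ω, (hitTime f γ n₁ I ω : ℝ≥0∞) ∂μ := by
    rw [lintegral_natCast_eq_tsum_measure_lt (measurable_hitTime hmeas)]
    exact tsum_congr fun k => measure_congr (hA k)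
  have hwald := integral_tsum_indicator_eq_mul_tsum hmeas hindep hbd hmean
    measurableSet_notStoppedAt (hsumA ▸ lintegral_hitTime_ne_top hmeas hindep hbd hmean hC hI)
  have hexpect : ∑' k, μ.real (notStoppedAt f γ n₁ I k) = ∫ ω, (hitTime f γ n₁ I ω : ℝ) ∂μ := by
    have hN : Measurable fun ω => (hitTime f γ n₁ I ω : ℝ≥0∞) :=
      measurable_from_nat.comp (measurable_hitTime hmeas)
    simp only [measureReal_def]
    rw [← ENNReal.tsum_toReal_eq fun k => measure_ne_top _ _, hsumA,
      ← integral_toReal hN.aemeasurable (ae_of_all _ fun _ => ENNReal.natCast_lt_top _)]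
    simp
  have hstopped : (fun ω => ∑' k, (notStoppedAt f γ n₁ I k).indicator (f k) ω)
      =ᵐ[μ] fun ω => ∑ k ∈ range (hitTime f γ n₁ I ω), f k ω := by
    filter_upwards [hhit] with ω hω
    rw [tsum_eq_sum (s := range (hitTime f γ n₁ I ω)) fun k hk => Set.indicator_of_notMem
      (fun h => hk (mem_range.2 ((mem_notStoppedAt_iff hω k).1 h))) _]
    exact sum_congr rfl fun k hk =>
      Set.indicator_of_mem ((mem_notStoppedAt_iff hω k).2 (mem_range.1 hk)) _
  rw [le_div_iff₀ hC, mul_comm, ← hexpect, ← hwald, integral_congr_ae hstopped]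
  calc ∫ ω, ∑ k ∈ range (hitTime f γ n₁ I ω), f k ω ∂μ
      ≤ ∫ _, (γ + ((max n₁ I : ℕ) : ℝ) * B) ∂μ :=
        integral_mono (integrable_sum_range_hitTime hmeas hindep hbd hmean hC hI)
          (integrable_const _) fun ω => sum_range_hitTime_le hbd hγ ω
    _ = γ + ((max n₁ I : ℕ) : ℝ) * B := by simp

end BoundedIncrements

end

-- Decoding times are indexed from `j = 0`: `n_j = n₁ + j * I`.
theorem stmt12_general {𝒳 𝒴 : Type*} [Fintype 𝒳] [Fintype 𝒴]
    [MeasurableSpace 𝒳] [DiscreteMeasurableSpace 𝒳]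
    [MeasurableSpace 𝒴] [DiscreteMeasurableSpace 𝒴]
    (pX : 𝒳 → ℝ) (hpXpos : ∀ x, 0 < pX x)
    (W : 𝒳 → 𝒴 → ℝ) (hWpos : ∀ x y, 0 < W x y)
    (C B : ℝ)
    (hCdef : C = ∑ x, ∑ y, pX x * W x y * infoDen pX W x y)
    -- `P_{XY} ≠ P_X ⊗ P_Y`, equivalently `C > 0`:
    (hC : 0 < C)
    (hBdef : B = ⨆ x : 𝒳, ⨆ y : 𝒴, |infoDen pX W x y|)
    {Ω : Type*} [MeasurableSpace Ω] (μ : Measure Ω) [IsProbabilityMeasure μ]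
    (X : ℕ → Ω → 𝒳) (Y : ℕ → Ω → 𝒴)
    (hXm : ∀ k, Measurable (X k)) (hYm : ∀ k, Measurable (Y k))
    -- `((X_k, Y_k))_k` is an i.i.d. sequence with law `P_{XY}`:
    (hXYindep : iIndepFun (fun k ω => (X k ω, Y k ω)) μ)
    (hXYlaw : ∀ k x y, μ {ω | X k ω = x ∧ Y k ω = y} = ENNReal.ofReal (pX x * W x y))
    (n₁ I : ℕ) (hI : 1 ≤ I) (γ : ℝ) (hγ : 0 ≤ γ) :
    -- `τ₀ < ∞` almost surely:
    μ {ω | ∀ j : ℕ, (∑ k ∈ Finset.range (n₁ + j * I), infoDen pX W (X k ω) (Y k ω)) < γ} = 0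
    -- `n_{τ₀}` is integrable:
    ∧ Integrable (fun ω => ((n₁ + (sInf {j : ℕ |
        γ ≤ ∑ k ∈ Finset.range (n₁ + j * I), infoDen pX W (X k ω) (Y k ω)}) * I : ℕ) : ℝ)) μ
    -- `E[n_{τ₀}] ≤ (γ + max(n₁, I)·B)/C`:
    ∧ ∫ ω, ((n₁ + (sInf {j : ℕ |
          γ ≤ ∑ k ∈ Finset.range (n₁ + j * I), infoDen pX W (X k ω) (Y k ω)}) * I : ℕ) : ℝ) ∂μ
        ≤ (γ + (max n₁ I : ℕ) * B) / C := by
  set f : ℕ → Ω → ℝ := fun k ω => infoDen pX W (X k ω) (Y k ω)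
  have hdens : Measurable fun p : 𝒳 × 𝒴 => infoDen pX W p.1 p.2 := .of_discrete
  have hmeas : ∀ k, Measurable (f k) := fun k => hdens.comp ((hXm k).prodMk (hYm k))
  have hindep : iIndepFun f μ := hXYindep.comp _ fun _ => hdens
  have hbd : ∀ k ω, |f k ω| ≤ B := fun k ω => hBdef ▸
    (le_ciSup (Set.finite_range _).bddAbove (Y k ω)).trans
      (le_ciSup (f := fun x => ⨆ y, |infoDen pX W x y|) (Set.finite_range _).bddAbove (X k ω))
  have hmean : ∀ k, μ[f k] = C := fun k => by
    rw [integral_comp_eq_sum_measureReal_preimage ((hXm k).prodMk (hYm k))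
      (fun p => infoDen pX W p.1 p.2), hCdef, Fintype.sum_prod_type]
    refine Finset.sum_congr rfl fun x _ => Finset.sum_congr rfl fun y _ => ?_
    have hpre : (fun ω => (X k ω, Y k ω)) ⁻¹' {(x, y)} = {ω | X k ω = x ∧ Y k ω = y} := by
      ext; simp
    rw [hpre, measureReal_def, hXYlaw, ENNReal.toReal_ofReal (mul_pos (hpXpos x) (hWpos x y)).le]
  exact ⟨measure_forall_sum_lt_eq_zero hmeas hindep hbd hmean hC hI,
    integrable_hitTime hmeas hindep hbd hmean hC hI,
    integral_hitTime_le hmeas hindep hbd hmean hC hI hγ⟩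

/-- For `n₁ ≥ 1`, `I ≥ 1`, `γ ≥ 0`, with decoding times
`n_j = n₁ + (j−1)·I` (here indexed so that `n_j = n₁ + j·I`, `j : ℕ`) and hitting
time `τ₀ = inf{j : S_{n_j} ≥ γ}`: `τ₀ < ∞` a.s., `n_{τ₀}` is integrable, and
`E[n_{τ₀}] ≤ (γ + max(n₁, I)·B)/C`. -/
theorem stmt12 {𝒳 𝒴 : Type*} [Fintype 𝒳] [Nonempty 𝒳] [Fintype 𝒴] [Nonempty 𝒴]
    [MeasurableSpace 𝒳] [DiscreteMeasurableSpace 𝒳]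
    [MeasurableSpace 𝒴] [DiscreteMeasurableSpace 𝒴]
    (pX : 𝒳 → ℝ) (hpXpos : ∀ x, 0 < pX x) (hpXsum : ∑ x, pX x = 1)
    (W : 𝒳 → 𝒴 → ℝ) (hWpos : ∀ x y, 0 < W x y) (hWsum : ∀ x, ∑ y, W x y = 1)
    (C B : ℝ)
    (hCdef : C = ∑ x, ∑ y, pX x * W x y * infoDen pX W x y)
    -- `P_{XY} ≠ P_X ⊗ P_Y`, equivalently `C > 0`:
    (hC : 0 < C)
    (hBdef : B = ⨆ x : 𝒳, ⨆ y : 𝒴, |infoDen pX W x y|)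
    {Ω : Type*} [MeasurableSpace Ω] (μ : Measure Ω) [IsProbabilityMeasure μ]
    (X : ℕ → Ω → 𝒳) (Y : ℕ → Ω → 𝒴)
    (hXm : ∀ k, Measurable (X k)) (hYm : ∀ k, Measurable (Y k))
    -- `((X_k, Y_k))_k` is an i.i.d. sequence with law `P_{XY}`:
    (hXYindep : iIndepFun (fun k ω => (X k ω, Y k ω)) μ)
    (hXYlaw : ∀ k x y, μ {ω | X k ω = x ∧ Y k ω = y} = ENNReal.ofReal (pX x * W x y))
    (n₁ I : ℕ) (hn₁ : 1 ≤ n₁) (hI : 1 ≤ I) (γ : ℝ) (hγ : 0 ≤ γ) :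
    -- `τ₀ < ∞` almost surely:
    μ {ω | ∀ j : ℕ, (∑ k ∈ Finset.range (n₁ + j * I), infoDen pX W (X k ω) (Y k ω)) < γ} = 0
    -- `n_{τ₀}` is integrable:
    ∧ Integrable (fun ω => ((n₁ + (sInf {j : ℕ |
        γ ≤ ∑ k ∈ Finset.range (n₁ + j * I), infoDen pX W (X k ω) (Y k ω)}) * I : ℕ) : ℝ)) μ
    -- `E[n_{τ₀}] ≤ (γ + max(n₁, I)·B)/C`:
    ∧ ∫ ω, ((n₁ + (sInf {j : ℕ |
          γ ≤ ∑ k ∈ Finset.range (n₁ + j * I), infoDen pX W (X k ω) (Y k ω)}) * I : ℕ) : ℝ) ∂μ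
        ≤ (γ + (max n₁ I : ℕ) * B) / C :=
  stmt12_general pX hpXpos W hWpos C B hCdef hC hBdef μ X Y hXm hYm hXYindep hXYlaw n₁ I hI γ hγ
end
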